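/- Let (α_n) and (β_n) be complex sequences with α_0 = 1 and α_1 = 0, and suppose that for every n ≥ 0, (2+b)·α_{n+2} = Σ_{j=0}^{n} β_j·(4α_{n−j} + 2a·α_{n−j+1} + b·α_{n−j+2}), where a,b ∈ ℂ with b ≠ −2. Then the formal power series M(z) = Σ α_n z^n and m(z) = Σ β_n z^n satisfy M(z)·(2+b − (4z² + 2az + b)·m(z)) = 2+b − (2az + b)·m(z) in ℂ[[z]]. -/

import Mathlib

/-! Multiplying the recursion by `z^{n+2}` and summing over `n` turns it into the single series
identity `(2+b)·N = m·(4M + 2a·M₁ + b·N)`, where `M₁ = (M - 1)/z` and `N = (M - 1)/z²` are the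
shifts of `M` (using `α₀ = 1`, `α₁ = 0`). Clearing denominators by `z²` gives the claim. -/

open PowerSeries

namespace PowerSeries

variable {R : Type*}

theorem coeff_mk_mul_mk [Semiring R] (f g : ℕ → R) (n : ℕ) :
    coeff n (mk f * mk g) = ∑ j ∈ Finset.range (n + 1), f j * g (n - j) := by
  simp only [coeff_mul, coeff_mk]
  exact Finset.Nat.sum_antidiagonal_eq_sum_range_succ (fun i j => f i * g j) n

theorem mk_eq_X_mul_mk_succ_add_C [Ring R] (f : ℕ → R) :
    mk f = X * mk (fun n => f (n + 1)) + C (f 0) := by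
  simpa using eq_X_mul_shift_add_const (mk f)

end PowerSeries

theorem C_mul_mk_shift_eq_of_moment_recursion {R : Type*} [CommRing R] (a b : R) (α β : ℕ → R)
    (hrec : ∀ n : ℕ, (2 + b) * α (n + 2) =
      ∑ j ∈ Finset.range (n + 1),
        β j * (4 * α (n - j) + 2 * a * α (n - j + 1) + b * α (n - j + 2))) :
    C (2 + b) * mk (fun n => α (n + 2)) =
      mk β * (4 * mk α + 2 * C a * mk (fun n => α (n + 1)) + C b * mk (fun n => α (n + 2))) := by
  have hcomb : 4 * mk α + 2 * C a * mk (fun n => α (n + 1)) + C b * mk (fun n => α (n + 2)) =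
      mk (fun n => 4 * α n + 2 * a * α (n + 1) + b * α (n + 2)) := by
    ext n
    simp only [← map_ofNat C, ← map_mul, map_add, coeff_C_mul, coeff_mk]
  ext n
  rw [hcomb, coeff_mk_mul_mk, coeff_C_mul, coeff_mk]
  exact hrec n

theorem stmt_1_general (a b : ℂ) (α β : ℕ → ℂ)
    (hα0 : α 0 = 1) (hα1 : α 1 = 0)
    (hrec : ∀ n : ℕ, (2 + b) * α (n + 2) =
      ∑ j ∈ Finset.range (n + 1),
        β j * (4 * α (n - j) + 2 * a * α (n - j + 1) + b * α (n - j + 2))) :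
    (PowerSeries.mk α) *
        (C (2 + b) - (4 * X ^ 2 + 2 * C a * X + C b) * PowerSeries.mk β)
      = C (2 + b) - (2 * C a * X + C b) * PowerSeries.mk β := by
  have hM : mk α = X * mk (fun n => α (n + 1)) + 1 := by
    simpa [hα0] using mk_eq_X_mul_mk_succ_add_C α
  have hM₁ : mk (fun n => α (n + 1)) = X * mk (fun n => α (n + 2)) := by
    simpa [hα1] using mk_eq_X_mul_mk_succ_add_C (fun n => α (n + 1))
  have key := C_mul_mk_shift_eq_of_moment_recursion a b α β hrec
  linear_combination X ^ 2 * key + (C (2 + b) - C b * mk β) * X * hM₁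
    + (C (2 + b) - C b * mk β - 2 * C a * X * mk β) * hM

/-- the moment recursion implies the formal power series identity
`M(z)·(2+b − (4z²+2az+b)·m(z)) = 2+b − (2az+b)·m(z)`. -/
theorem stmt_1 (a b : ℂ) (hb : b ≠ -2) (α β : ℕ → ℂ)
    (hα0 : α 0 = 1) (hα1 : α 1 = 0)
    (hrec : ∀ n : ℕ, (2 + b) * α (n + 2) =
      ∑ j ∈ Finset.range (n + 1),
        β j * (4 * α (n - j) + 2 * a * α (n - j + 1) + b * α (n - j + 2))) :
    (PowerSeries.mk α) *
        (C (2 + b) - (4 * X ^ 2 + 2 * C a * X + C b) * PowerSeries.mk β)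
      = C (2 + b) - (2 * C a * X + C b) * PowerSeries.mk β :=
  stmt_1_general a b α β hα0 hα1 hrec
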